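/- arXiv:2508.04587 — 2 statements merged into one kernel-verified Lean document; each statement's English description precedes it below -/
import Mathlib

section
/- Let f₁, …, f_n be differentiable functions on a finite-dimensional real inner product space E and x ∈ E. The following are equivalent: (1) there is no vector v ∈ E with ⟨v, ∇fᵢ(x)⟩ > 0 for all i; (2) 0 lies in the convex hull of {∇f₁(x), …, ∇f_n(x)}. -/
/-- Gordan-type alternative: for differentiable `f₁, …, fₙ` on a finite-dimensional
real inner product space and `x ∈ E`, there is no vector `v` with `⟨v, ∇fᵢ(x)⟩ > 0`
for all `i` iff `0` lies in the convex hull of `{∇f₁(x), …, ∇fₙ(x)}`. -/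
theorem no_uniformly_increasing_direction_iff_zero_mem_convexHull_gradients
    {E : Type*} [NormedAddCommGroup E] [InnerProductSpace ℝ E] [FiniteDimensional ℝ E]
    {n : ℕ} (f : Fin n → E → ℝ) (hdiff : ∀ i, Differentiable ℝ (f i)) (x : E) :
    (¬ ∃ v : E, ∀ i, 0 < (inner ℝ v (gradient (f i) x) : ℝ)) ↔
      (0 : E) ∈ convexHull ℝ (Set.range fun i => gradient (f i) x) := by
  set g : Fin n → E := fun i => gradient (f i) x with hg
  constructor
  · intro h
    by_contra h0
    have hclosed : IsClosed (convexHull ℝ (Set.range g)) :=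
      (Set.finite_range g).isClosed_convexHull ℝ
    obtain ⟨φ, u, hu0, hub⟩ := geometric_hahn_banach_point_closed
      (convex_convexHull ℝ _) hclosed h0
    obtain ⟨v, hv⟩ := (InnerProductSpace.toDual ℝ E).surjective φ
    refine h ⟨v, fun i => ?_⟩
    have : u < φ (g i) := hub _ (subset_convexHull ℝ _ ⟨i, rfl⟩)
    have hφ : φ (g i) = (inner ℝ v (g i) : ℝ) := by
      rw [← hv]; rfl
    have h0u : (0 : ℝ) < u := by simpa using hu0
    rw [← hφ]; linarith
  · rintro hmem ⟨v, hv⟩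
    rw [convexHull_range_eq_exists_affineCombination] at hmem
    obtain ⟨s, w, hw0, hw1, hcomb⟩ := hmem
    have hsum : ∑ i ∈ s, w i • g i = 0 := by
      have := Finset.affineCombination_eq_weightedVSubOfPoint_vadd_of_sum_eq_one s w g hw1 (0 : E)
      rw [hcomb] at this
      simpa [Finset.weightedVSubOfPoint_apply] using this.symm
    have hinner : (0 : ℝ) = ∑ i ∈ s, w i * (inner ℝ v (g i) : ℝ) := by
      have := congrArg (fun y => (inner ℝ v y : ℝ)) hsum
      simpa [inner_sum, inner_smul_right] using this.symm
    have hne : s.Nonempty := by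
      by_contra hs
      rw [Finset.not_nonempty_iff_eq_empty] at hs
      simp [hs] at hw1
    obtain ⟨j, hj, hwj⟩ : ∃ j ∈ s, 0 < w j := by
      by_contra hc
      push_neg at hc
      have : ∑ i ∈ s, w i = 0 :=
        Finset.sum_eq_zero fun i hi => le_antisymm (hc i hi) (hw0 i hi)
      rw [hw1] at this; norm_num at this
    have hpos : (0 : ℝ) < ∑ i ∈ s, w i * (inner ℝ v (g i) : ℝ) := by
      apply Finset.sum_pos' (fun i hi => mul_nonneg (hw0 i hi) (hv i).le)
      exact ⟨j, hj, mul_pos hwj (hv j)⟩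
    linarith [hinner]
end

section
/- Let f : E → ℝ be a continuous convex function on a finite-dimensional normed space whose sublevel sets {f ≤ t} are compact for every t. If f has a unique minimizer x₀ with value m, then for every t > m the level set {f = t} is compact and every ray from x₀ meets it in exactly one point, giving a homeomorphism of {f = t} with the unit sphere of E (of dimension dim E − 1). -/
/-- Let `f` be a continuous convex function on a finite-dimensional normed space with
compact sublevel sets and a unique minimizer `x₀` with value `m`. For every `t > m`,
the level set `{f = t}` is compact, every ray from `x₀` meets it in exactly one
point, and it is homeomorphic to the unit sphere. -/
theorem convex_level_set_above_min_is_sphere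
    {E : Type*} [NormedAddCommGroup E] [NormedSpace ℝ E] [FiniteDimensional ℝ E]
    (f : E → ℝ) (hconv : ConvexOn ℝ Set.univ f) (hcont : Continuous f)
    (hcompact : ∀ t : ℝ, IsCompact {x | f x ≤ t})
    (x₀ : E) (m : ℝ) (hmin : f x₀ = m) (hx₀ : ∀ x : E, x ≠ x₀ → m < f x)
    (t : ℝ) (ht : m < t) :
    IsCompact {x | f x = t} ∧
      (∀ u : E, u ≠ 0 → ∃! s : ℝ, 0 < s ∧ f (x₀ + s • u) = t) ∧
      Nonempty (({x | f x = t} : Set E) ≃ₜ (Metric.sphere (0 : E) 1 : Set E)) := by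
  -- compactness of the level set
  have hc : IsCompact {x : E | f x = t} := by
    refine (hcompact t).of_isClosed_subset (isClosed_eq hcont continuous_const) ?_
    intro x hx; exact le_of_eq hx
  -- a bound on the sublevel set
  obtain ⟨R, hR⟩ := (hcompact t).isBounded.subset_closedBall 0
  -- strict monotonicity consequence of convexity
  have uniq : ∀ (u : E), u ≠ 0 → ∀ s₁ s₂ : ℝ, 0 < s₁ → f (x₀ + s₁ • u) = t →
      0 < s₂ → f (x₀ + s₂ • u) = t → s₁ < s₂ → False := by
    intro u hu s₁ s₂ hs₁ hf₁ hs₂ hf₂ hlt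
    set lam : ℝ := s₁ / s₂ with hlam
    have hlam0 : 0 < lam := div_pos hs₁ hs₂
    have hlam1 : lam < 1 := (div_lt_one hs₂).2 hlt
    have hco : x₀ + s₁ • u = (1 - lam) • x₀ + lam • (x₀ + s₂ • u) := by
      have : lam * s₂ = s₁ := div_mul_cancel₀ _ (ne_of_gt hs₂)
      rw [smul_add, ← add_assoc, ← add_smul, smul_smul, this]; simp
    have := hconv.2 (Set.mem_univ x₀) (Set.mem_univ (x₀ + s₂ • u))
      (by linarith : (0:ℝ) ≤ 1 - lam) (le_of_lt hlam0) (by ring)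
    rw [← hco, hf₁, hmin, hf₂] at this
    simp only [smul_eq_mul] at this
    nlinarith [mul_pos (sub_pos.2 hlam1) (sub_pos.2 ht)]
  have key : ∀ u : E, u ≠ 0 → ∃! s : ℝ, 0 < s ∧ f (x₀ + s • u) = t := by
    intro u hu
    have hnu : 0 < ‖u‖ := norm_pos_iff.2 hu
    -- existence via IVT
    set S : ℝ := (R + ‖x₀‖ + 1) / ‖u‖ with hS
    have hS0 : 0 ≤ S := by
      have hR0 : 0 ≤ R := by
        have := hR (by simpa [hmin] using le_of_lt ht : x₀ ∈ {x : E | f x ≤ t})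
        have := Metric.mem_closedBall.1 this
        have := norm_nonneg x₀
        simp only [dist_zero_right] at *
        linarith
      positivity
    have hgt : t < f (x₀ + S • u) := by
      by_contra h
      push_neg at h
      have hmem := hR (h : (x₀ + S • u) ∈ {x : E | f x ≤ t})
      rw [Metric.mem_closedBall, dist_zero_right] at hmem
      have h1 : ‖S • u‖ ≤ ‖x₀ + S • u‖ + ‖x₀‖ := by
        calc ‖S • u‖ = ‖(x₀ + S • u) - x₀‖ := by congr 1; abel
          _ ≤ _ := norm_sub_le _ _
      have h2 : ‖S • u‖ = S * ‖u‖ := by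
        rw [norm_smul, Real.norm_of_nonneg hS0]
      have h3 : S * ‖u‖ = R + ‖x₀‖ + 1 := div_mul_cancel₀ _ (ne_of_gt hnu)
      linarith
    have hcg : ContinuousOn (fun s : ℝ => f (x₀ + s • u)) (Set.Icc 0 S) :=
      (hcont.comp (by continuity)).continuousOn
    have hmem : t ∈ Set.Icc (f (x₀ + (0:ℝ) • u)) (f (x₀ + S • u)) := by
      constructor
      · simpa [hmin] using le_of_lt ht
      · exact le_of_lt hgt
    obtain ⟨s, hsmem, hs⟩ := intermediate_value_Icc hS0 hcg hmem
    have hspos : 0 < s := by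
      rcases lt_or_eq_of_le hsmem.1 with h | h
      · exact h
      · exfalso; rw [← h] at hs; simp [hmin] at hs; linarith
    refine ⟨s, ⟨hspos, hs⟩, ?_⟩
    intro s' hs'
    rcases lt_trichotomy s' s with h | h | h
    · exact absurd (uniq u hu s' s hs'.1 hs'.2 hspos hs h) (fun x => x)
    · exact h
    · exact absurd (uniq u hu s s' hspos hs hs'.1 hs'.2 h) (fun x => x)
  refine ⟨hc, key, ?_⟩
  -- the homeomorphism
  have hne : ∀ x : E, f x = t → x ≠ x₀ := by
    intro x hx h
    rw [h, hmin] at hx; linarith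
  -- forward map
  have hmap : ∀ x : {x : E | f x = t}, (‖(x : E) - x₀‖⁻¹ • ((x : E) - x₀)) ∈
      (Metric.sphere (0 : E) 1 : Set E) := by
    rintro ⟨x, hx⟩
    have hxne : x - x₀ ≠ 0 := sub_ne_zero.2 (hne x hx)
    simp [Metric.mem_sphere, norm_smul, norm_ne_zero_iff.2 hxne,
      inv_mul_cancel₀ (norm_ne_zero_iff.2 hxne)]
  set F : {x : E | f x = t} → (Metric.sphere (0 : E) 1 : Set E) :=
    fun x => ⟨‖(x : E) - x₀‖⁻¹ • ((x : E) - x₀), hmap x⟩ with hF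
  have hFcont : Continuous F := by
    refine Continuous.subtype_mk ?_ _
    refine Continuous.smul ?_ (by continuity)
    refine Continuous.inv₀ (by continuity) ?_
    rintro ⟨x, hx⟩
    exact norm_ne_zero_iff.2 (sub_ne_zero.2 (hne x hx))
  have hFinj : Function.Injective F := by
    rintro ⟨x, hx⟩ ⟨y, hy⟩ hxy
    simp only [F, Subtype.mk_eq_mk] at hxy
    have hxne : x - x₀ ≠ 0 := sub_ne_zero.2 (hne x hx)
    have hyne : y - x₀ ≠ 0 := sub_ne_zero.2 (hne y hy)
    set u : E := ‖x - x₀‖⁻¹ • (x - x₀) with hu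
    have hun : u ≠ 0 := by
      simp [hu, smul_ne_zero_iff, hxne, inv_ne_zero (norm_ne_zero_iff.2 hxne)]
    have hxu : x = x₀ + ‖x - x₀‖ • u := by
      rw [hu, smul_smul, mul_inv_cancel₀ (norm_ne_zero_iff.2 hxne), one_smul]
      abel
    have hyu : y = x₀ + ‖y - x₀‖ • u := by
      rw [hxy, smul_smul, mul_inv_cancel₀ (norm_ne_zero_iff.2 hyne), one_smul]
      abel
    obtain ⟨s, _, hsuniq⟩ := key u hun
    have h1 : ‖x - x₀‖ = s := hsuniq _ ⟨norm_pos_iff.2 hxne, by rw [← hxu]; exact hx⟩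
    have h2 : ‖y - x₀‖ = s := hsuniq _ ⟨norm_pos_iff.2 hyne, by rw [← hyu]; exact hy⟩
    have : x = y := by rw [hxu, hyu, h1, h2]
    exact Subtype.ext this
  have hFsurj : Function.Surjective F := by
    rintro ⟨u, hu⟩
    rw [Metric.mem_sphere, dist_zero_right] at hu
    have hun : u ≠ 0 := by intro h; rw [h] at hu; simp at hu
    obtain ⟨s, ⟨hs0, hst⟩, _⟩ := key u hun
    refine ⟨⟨x₀ + s • u, hst⟩, ?_⟩
    apply Subtype.ext
    simp only [F]
    have : x₀ + s • u - x₀ = s • u := by abel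
    rw [this, norm_smul, Real.norm_of_nonneg (le_of_lt hs0), hu, mul_one, smul_smul,
      inv_mul_cancel₀ (ne_of_gt hs0), one_smul]
  haveI : CompactSpace {x : E | f x = t} := isCompact_iff_compactSpace.1 hc
  exact ⟨Continuous.homeoOfEquivCompactToT2 (f := Equiv.ofBijective F ⟨hFinj, hFsurj⟩) hFcont⟩
end
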